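/- Let A : ℕ → ℕ be defined by A(0) = 1, A(1) = 2, and A(n) = 1 + C(A(n−2)+1, 2) + A(n−2)·(A(n−1) − A(n−2)) for n ≥ 2, and for n ≥ 2 let E(n) = log(1 + 1/(2·A(n−1)) − A(n−2)/(2·A(n−1)) + 1/(A(n−1)·A(n−2))). Let φ = (1+√5)/2. Then the series ∑_{i=2}^{∞} E(i)·φ^{1−i} converges absolutely (i.e., the function i ↦ E(i)·φ^{1−i} on {i : i ≥ 2} is summable). -/

import Mathlib

/-!
The sequence `A` is increasing, so with `a = A (n - 2) ≤ b = A (n - 1)` the argument of the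
logarithm in `E n` is `1 + (1 - a) / (2 b) + 1 / (a b) ∈ [1/2, 2]`. Hence `|E n| ≤ log 2`, and the
series is dominated by a geometric series of ratio `φ⁻¹ < 1`.
-/

def A : ℕ → ℕ
  | 0 => 1
  | 1 => 2
  | n + 2 => 1 + Nat.choose (A n + 1) 2 + A n * (A (n + 1) - A n)

noncomputable def E (n : ℕ) : ℝ :=
  Real.log (1 + 1 / (2 * (A (n - 1) : ℝ)) - (A (n - 2) : ℝ) / (2 * (A (n - 1) : ℝ))
    + 1 / ((A (n - 1) : ℝ) * (A (n - 2) : ℝ)))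

noncomputable def φ : ℝ := (1 + Real.sqrt 5) / 2

open Real

lemma one_le_A : ∀ n, 1 ≤ A n
  | 0 | 1 => by decide
  | n + 2 => by rw [A]; omega

lemma A_lt_A_succ (n : ℕ) : A n < A (n + 1) := by
  induction n with
  | zero => decide
  | succ n ih =>
    have h_choose : A n ≤ (A n + 1).choose 2 := by
      rw [Nat.choose_succ_succ, Nat.choose_one_right]
      exact Nat.le_add_right _ _
    have h_mul : A (n + 1) - A n ≤ A n * (A (n + 1) - A n) :=
      Nat.le_mul_of_pos_left _ (one_le_A n)
    rw [A]
    omega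

lemma A_strictMono : StrictMono A := strictMono_nat_of_lt_succ A_lt_A_succ

lemma abs_log_le_log_of_inv_le_of_le {x c : ℝ} (hc : 0 < c) (hlo : c⁻¹ ≤ x) (hhi : x ≤ c) :
    |log x| ≤ log c := by
  have hx : 0 < x := (inv_pos.mpr hc).trans_le hlo
  rw [abs_le, ← log_inv]
  exact ⟨log_le_log (inv_pos.mpr hc) hlo, log_le_log hx hhi⟩

lemma E_arg_mem_Icc {a b : ℝ} (ha : 1 ≤ a) (hab : a ≤ b) :
    1 + 1 / (2 * b) - a / (2 * b) + 1 / (b * a) ∈ Set.Icc (1 / 2) 2 := by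
  have hb : 0 < b := by linarith
  have h_sub : 1 / (2 * b) - a / (2 * b) = (1 - a) / (2 * b) := by ring
  have h_diff_lo : -(1 / 2) ≤ (1 - a) / (2 * b) := by
    rw [le_div_iff₀ (by positivity)]; linarith
  have h_diff_hi : (1 - a) / (2 * b) ≤ 0 := div_nonpos_of_nonpos_of_nonneg (by linarith) (by positivity)
  have h_inv_hi : 1 / (b * a) ≤ 1 := by
    rw [div_le_one (by positivity)]; nlinarith
  have h_inv_lo : 0 ≤ 1 / (b * a) := by positivity
  constructor <;> linarith

-- Also for `n < 2`, where the truncated indices `n - 1`, `n - 2` both read `A 0`.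
lemma abs_E_le (n : ℕ) : |E n| ≤ log 2 := by
  have ha : (1 : ℝ) ≤ A (n - 2) := by exact_mod_cast one_le_A _
  have hab : (A (n - 2) : ℝ) ≤ A (n - 1) := by exact_mod_cast A_strictMono.monotone (by omega)
  obtain ⟨hlo, hhi⟩ := E_arg_mem_Icc ha hab
  exact abs_log_le_log_of_inv_le_of_le two_pos (by simpa using hlo) hhi

lemma summable_mul_zpow_one_sub {f : ℕ → ℝ} {C r : ℝ} (hf : ∀ n, |f n| ≤ C) (hr : 1 < r) :
    Summable (fun n : ℕ => f n * r ^ (1 - (n : ℤ))) := by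
  have hr0 : 0 < r := by linarith
  have h_geom : Summable (fun n : ℕ => C * (r * r⁻¹ ^ n)) :=
    ((summable_geometric_of_lt_one (by positivity) (inv_lt_one_of_one_lt₀ hr)).mul_left r).mul_left C
  refine Summable.of_norm_bounded h_geom fun n => ?_
  have h_zpow : r ^ (1 - (n : ℤ)) = r * r⁻¹ ^ n := by
    rw [zpow_sub₀ hr0.ne', zpow_one, zpow_natCast, inv_pow, div_eq_mul_inv]
  rw [h_zpow, norm_mul, Real.norm_eq_abs, Real.norm_of_nonneg (by positivity)]
  exact mul_le_mul_of_nonneg_right (hf n) (by positivity)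

lemma one_lt_φ : 1 < φ := Real.one_lt_goldenRatio

theorem stmt_8 :
    Summable (fun i : {i : ℕ // 2 ≤ i} => E i * φ ^ (1 - (i : ℤ))) :=
  (summable_mul_zpow_one_sub abs_E_le one_lt_φ).subtype {i | 2 ≤ i}
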